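/- Let p ∈ [0,1] and k ∈ [n_b]. List the members of 𝒪^w_k in increasing Prim rank as v_{k,1},…,v_{k,O^w_k} where O^w_k = |𝒪^w_k|. Set 𝒦_{k,1} = 𝒦^b_k, and for 1 ≤ i ≤ O^w_k let 𝒩_i = N(v_{k,i}) ∩ 𝒦_{k,i} and 𝒦_{k,i+1} = 𝒦_{k,i} ∖ 𝒩_i. Set 𝒩_0 = N(σ(τ^b_k − 1)) ∩ 𝒦_{k,O^w_k+1} if σ(τ^b_k − 1) ∈ 𝒥^w_k ∩ N(σ(τ^b_k)), and 𝒩_0 = ∅ otherwise. Then the sets 𝒩_i, 0 ≤ i ≤ O^w_k, are pairwise disjoint and 𝒪^b_k = ∪_{0≤i≤O^w_k} 𝒩_i. -/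

import Mathlib

open MeasureTheory ProbabilityTheory Filter

namespace PrimBip

/-- Vertex set of the complete bipartite graph `K_{n_b,n_w}`:
black vertices are `Sum.inl`, white vertices are `Sum.inr`. -/
abbrev V (nb nw : ℕ) := Fin nb ⊕ Fin nw

def blacks (nb nw : ℕ) : Set (V nb nw) := Set.range Sum.inl

def whites (nb nw : ℕ) : Set (V nb nw) := Set.range Sum.inr

/-- Edge weights extended to pairs of vertices; non-edges get the junk value `2`. -/
def wt {nb nw : ℕ} (W : Fin nb → Fin nw → ℝ) : V nb nw → V nb nw → ℝ
  | Sum.inl b, Sum.inr w => W b w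
  | Sum.inr w, Sum.inl b => W b w
  | _, _ => 2

lemma wt_symm {nb nw : ℕ} (W : Fin nb → Fin nw → ℝ) (v v' : V nb nw) :
    wt W v v' = wt W v' v := by
  cases v <;> cases v' <;> rfl

/-- The a.s. properties of i.i.d. uniform edge weights: all weights lie in `(0,1)`
and are pairwise distinct. -/
def GoodWeights {nb nw : ℕ} (W : Fin nb → Fin nw → ℝ) : Prop :=
  (∀ b w, W b w ∈ Set.Ioo (0:ℝ) 1) ∧
    Function.Injective (fun bw : Fin nb × Fin nw => W bw.1 bw.2)

/-- `σ` (0-indexed: `σ 0` is the first vertex) is a Prim sequence for the weights `W`: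
it enumerates all the vertices, and at each step `k ≥ 1` the vertex `σ k` is an endpoint
of the minimal-weight edge joining `{σ 0, …, σ (k-1)}` to its complement. -/
def IsPrimSeq {nb nw : ℕ} (W : Fin nb → Fin nw → ℝ) (σ : ℕ → V nb nw) : Prop :=
  σ '' Set.Iio (nb + nw) = Set.univ ∧ Set.InjOn σ (Set.Iio (nb + nw)) ∧
    ∀ k, 0 < k → k < nb + nw →
      ∃ j < k, ∀ a b, a < k → k ≤ b → b < nb + nw →
        wt W (σ j) (σ k) ≤ wt W (σ a) (σ b)

/-- The Bernoulli bond percolation graph `G(n_b,n_w,p)`: keep exactly the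
(bipartite) edges of weight `≤ p`. -/
def percGraph {nb nw : ℕ} (W : Fin nb → Fin nw → ℝ) (p : ℝ) : SimpleGraph (V nb nw) where
  Adj v v' := v ≠ v' ∧ wt W v v' ≤ p
  symm := ⟨fun _ _ h => ⟨h.1.symm, by rw [wt_symm]; exact h.2⟩⟩
  loopless := ⟨fun _ h => h.1 rfl⟩

/-- 1-neighbourhood of a set of vertices. -/
def nbhd {α : Type*} (G : SimpleGraph α) (A : Set α) : Set α :=
  {v | v ∉ A ∧ ∃ a ∈ A, G.Adj a v}

/-- 2-neighbourhood of a set of vertices. -/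
def nbhd2 {α : Type*} (G : SimpleGraph α) (A : Set α) : Set α :=
  nbhd G (nbhd G A) \ A

/-- `Sig σ i` = `Σ(i)`, the set of the first `i` vertices in the Prim ranking. -/
def Sig {nb nw : ℕ} (σ : ℕ → V nb nw) (i : ℕ) : Set (V nb nw) := σ '' Set.Iio i

def SigB {nb nw : ℕ} (σ : ℕ → V nb nw) (i : ℕ) : Set (V nb nw) := Sig σ i ∩ blacks nb nw

def SigW {nb nw : ℕ} (σ : ℕ → V nb nw) (i : ℕ) : Set (V nb nw) := Sig σ i ∩ whites nb nw

/-- `tb σ k` = `τ^b_k`, the (1-based) Prim rank of the `k`-th black vertex. -/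
noncomputable def tb {nb nw : ℕ} (σ : ℕ → V nb nw) (k : ℕ) : ℕ :=
  sInf {i | (SigB σ i).ncard = k}

/-- The vertex of (1-based) Prim rank `i`. -/
def vat {nb nw : ℕ} (σ : ℕ → V nb nw) (i : ℕ) : V nb nw := σ (i - 1)

/-- `σ^b(k) = σ(τ^b_k)`, the `k`-th black vertex in Prim order. -/
noncomputable def sigb {nb nw : ℕ} (σ : ℕ → V nb nw) (k : ℕ) : V nb nw := vat σ (tb σ k)

/-- 0-based Prim rank of a vertex. -/
noncomputable def rk0 {nb nw : ℕ} (σ : ℕ → V nb nw) (v : V nb nw) : ℕ := sInf {i | σ i = v}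

/-- A lead vertex: the vertex of lowest Prim rank in its connected component of `G`. -/
def isLead {nb nw : ℕ} (G : SimpleGraph (V nb nw)) (σ : ℕ → V nb nw) (v : V nb nw) : Prop :=
  ∀ u, G.Reachable v u → rk0 σ v ≤ rk0 σ u

/-- A root vertex: a black vertex of lowest Prim rank among the black vertices of
its connected component of `G`. -/
def isRoot {nb nw : ℕ} (G : SimpleGraph (V nb nw)) (σ : ℕ → V nb nw) (v : V nb nw) : Prop :=
  v ∈ blacks nb nw ∧ ∀ u ∈ blacks nb nw, G.Reachable v u → rk0 σ v ≤ rk0 σ u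

/-- `𝒥^w_k`: the white lead vertices among `Σ^w(τ^b_k)`. -/
def Jw {nb nw : ℕ} (G : SimpleGraph (V nb nw)) (σ : ℕ → V nb nw) (k : ℕ) : Set (V nb nw) :=
  {v | v ∈ SigW σ (tb σ k) ∧ isLead G σ v}

/-- `ℐ^b_k`: the root vertices among `Σ^b(τ^b_k)`. -/
def Ib {nb nw : ℕ} (G : SimpleGraph (V nb nw)) (σ : ℕ → V nb nw) (k : ℕ) : Set (V nb nw) :=
  {v | v ∈ SigB σ (tb σ k) ∧ isRoot G σ v}

noncomputable def Jwc {nb nw : ℕ} (G : SimpleGraph (V nb nw)) (σ : ℕ → V nb nw) (k : ℕ) : ℕ :=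
  (Jw G σ k).ncard

noncomputable def Ibc {nb nw : ℕ} (G : SimpleGraph (V nb nw)) (σ : ℕ → V nb nw) (k : ℕ) : ℕ :=
  (Ib G σ k).ncard

/-- `𝒦^w_k`: the pool of white vertices available for discovery at step `k`. -/
noncomputable def Kw {nb nw : ℕ} (G : SimpleGraph (V nb nw)) (σ : ℕ → V nb nw) :
    ℕ → Set (V nb nw)
  | 0 => ∅
  | 1 => whites nb nw \ SigW σ (tb σ 1)
  | (k+2) => Kw G σ (k+1) \ ((nbhd G {sigb σ (k+1)} ∩ Kw G σ (k+1)) ∪ SigW σ (tb σ (k+2)))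

/-- `𝒪^w_k = N(σ^b(k)) ∩ 𝒦^w_k`. -/
noncomputable def Ow {nb nw : ℕ} (G : SimpleGraph (V nb nw)) (σ : ℕ → V nb nw) (k : ℕ) :
    Set (V nb nw) :=
  nbhd G {sigb σ k} ∩ Kw G σ k

/-- Auxiliary recursion: `(ObAux k).1 = ∪_{j ∈ [k]} 𝒪^b_j` and `(ObAux k).2 = 𝒪^b_k`. -/
noncomputable def ObAux {nb nw : ℕ} (G : SimpleGraph (V nb nw)) (σ : ℕ → V nb nw) :
    ℕ → Set (V nb nw) × Set (V nb nw)
  | 0 => (∅, ∅)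
  | (k+1) =>
    let c := (ObAux G σ k).1
    let o := nbhd2 G {sigb σ (k+1)} ∩ (blacks nb nw \ (c ∪ SigB σ (tb σ (k+1))))
    (c ∪ o, o)

/-- `𝒪^b_k`, the 2-neighbourhood discovered at step `k`. -/
noncomputable def Ob {nb nw : ℕ} (G : SimpleGraph (V nb nw)) (σ : ℕ → V nb nw) (k : ℕ) :
    Set (V nb nw) :=
  (ObAux G σ k).2

/-- `𝒦^b_k = V^b ∖ (∪_{j ≤ k-1} 𝒪^b_j ∪ Σ^b(τ^b_k))`. -/
noncomputable def Kb {nb nw : ℕ} (G : SimpleGraph (V nb nw)) (σ : ℕ → V nb nw) (k : ℕ) :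
    Set (V nb nw) :=
  blacks nb nw \ ((ObAux G σ (k-1)).1 ∪ SigB σ (tb σ k))

noncomputable def Owc {nb nw : ℕ} (G : SimpleGraph (V nb nw)) (σ : ℕ → V nb nw) (k : ℕ) : ℕ :=
  (Ow G σ k).ncard

noncomputable def Obc {nb nw : ℕ} (G : SimpleGraph (V nb nw)) (σ : ℕ → V nb nw) (k : ℕ) : ℕ :=
  (Ob G σ k).ncard

noncomputable def Kwc {nb nw : ℕ} (G : SimpleGraph (V nb nw)) (σ : ℕ → V nb nw) (k : ℕ) : ℕ :=
  (Kw G σ k).ncard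

noncomputable def Kbc {nb nw : ℕ} (G : SimpleGraph (V nb nw)) (σ : ℕ → V nb nw) (k : ℕ) : ℕ :=
  (Kb G σ k).ncard

/-- `S^w_k = Σ_{j ∈ [k]} O^w_j`. -/
noncomputable def Swk {nb nw : ℕ} (G : SimpleGraph (V nb nw)) (σ : ℕ → V nb nw) (k : ℕ) : ℕ :=
  ∑ j ∈ Finset.range k, Owc G σ (j+1)

/-- `S^b_k = Σ_{j ∈ [k]} O^b_j`. -/
noncomputable def Sbk {nb nw : ℕ} (G : SimpleGraph (V nb nw)) (σ : ℕ → V nb nw) (k : ℕ) : ℕ :=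
  ∑ j ∈ Finset.range k, Obc G σ (j+1)

/-- `R(k) = |Σ^w(τ^b_k)| − J^w(k)`. -/
noncomputable def Rfn {nb nw : ℕ} (G : SimpleGraph (V nb nw)) (σ : ℕ → V nb nw) (k : ℕ) : ℤ :=
  ((SigW σ (tb σ k)).ncard : ℤ) - Jwc G σ k

/-- `Δ_k = Σ_{1 ≤ i ≤ O^w_k} |𝒩_i| = |N(𝒪^w_k) ∩ 𝒦^b_k|`. -/
noncomputable def Delta {nb nw : ℕ} (G : SimpleGraph (V nb nw)) (σ : ℕ → V nb nw) (k : ℕ) : ℕ :=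
  (nbhd G (Ow G σ k) ∩ Kb G σ k).ncard

/-- `𝒜^w_k = {σ(i) : i > τ^b_k, σ(i) ∈ ∪_{j ∈ [k−1]} 𝒪^w_j}`. -/
noncomputable def Aw {nb nw : ℕ} (G : SimpleGraph (V nb nw)) (σ : ℕ → V nb nw) (k : ℕ) :
    Set (V nb nw) :=
  (⋃ j ∈ Finset.range (k-1), Ow G σ (j+1)) \ Sig σ (tb σ k)

/-- `𝒜^b_k = (∪_{j ∈ [k]} 𝒪^b_j) ∖ Σ^b(τ^b_k)`. -/
noncomputable def Ab {nb nw : ℕ} (G : SimpleGraph (V nb nw)) (σ : ℕ → V nb nw) (k : ℕ) :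
    Set (V nb nw) :=
  (⋃ j ∈ Finset.range k, Ob G σ (j+1)) \ SigB σ (tb σ k)

/-- The interval `⟦i,j⟧_π` of vertices of π-rank between `i` and `j`. -/
def geoInterval {α : Type*} {m : ℕ} (π : Fin m ≃ α) (i j : Fin m) : Set α :=
  {v | i ≤ π.symm v ∧ π.symm v ≤ j}

/-- `π` is a graph exploration order (GEO) for `G`. -/
def IsGEO {α : Type*} {m : ℕ} (G : SimpleGraph α) (π : Fin m ≃ α) : Prop :=
  ∀ i j : Fin m, i ≤ j → G.Reachable (π i) (π j) →
    ∃ i', i' ≤ i ∧ (G.induce (geoInterval π i' j)).Connected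

/-- A `π`-good path from `u` to `v`: a path along which the π-ranks strictly increase. -/
def IsGoodPath {α : Type*} {m : ℕ} (G : SimpleGraph α) (π : Fin m ≃ α) (u v : α) : Prop :=
  ∃ (k : ℕ) (w : ℕ → α), w 0 = u ∧ w k = v ∧ (∀ i < k, G.Adj (w i) (w (i+1))) ∧
    StrictMonoOn (fun i => π.symm (w i)) (Set.Iic k)

/-- GEO for a 0-indexed enumeration `σ` of the `n` vertices. -/
def IsGEOSeq {α : Type*} (G : SimpleGraph α) (n : ℕ) (σ : ℕ → α) : Prop :=
  ∀ i j, i ≤ j → j < n → G.Reachable (σ i) (σ j) →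
    ∃ i' ≤ i, (G.induce (σ '' Set.Icc i' j)).Connected

/-- `pew W σ i` = `U_{e_i}`, the weight of the `i`-th Prim edge: the minimal weight
over the cut between the first `i` vertices and the rest. -/
noncomputable def pew {nb nw : ℕ} (W : Fin nb → Fin nw → ℝ) (σ : ℕ → V nb nw) (i : ℕ) : ℝ :=
  sInf {x | ∃ a b, a < i ∧ i ≤ b ∧ b < nb + nw ∧ x = wt W (σ a) (σ b)}

/-- The sequence `J_j` of Prim ranks at which new components start. -/
noncomputable def Jseq {nb nw : ℕ} (W : Fin nb → Fin nw → ℝ) (σ : ℕ → V nb nw) (p : ℝ) :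
    ℕ → ℕ
  | 0 => 0
  | (j+1) => sInf ({i | Jseq W σ p j < i ∧ i < nb + nw ∧ p < pew W σ i} ∪ {nb + nw})

/-- `m = inf{j ≥ 1 : J_j = n}`, the number of connected components. -/
noncomputable def mComp {nb nw : ℕ} (W : Fin nb → Fin nw → ℝ) (σ : ℕ → V nb nw) (p : ℝ) : ℕ :=
  sInf {j | 1 ≤ j ∧ Jseq W σ p j = nb + nw}

/-- The binomial probability mass function. -/
noncomputable def binomPMF (m : ℕ) (p : ℝ) (j : ℕ) : ℝ :=
  (m.choose j : ℝ) * p ^ j * (1 - p) ^ (m - j)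

/-- The pmf of the distribution `𝒟(m, k, p)`: the law of `X_1 + ⋯ + X_k` where
`X_1 ~ Bin(m,p)` and, given `X_1,…,X_i`, `X_{i+1} ~ Bin(m − Σ_{j≤i} X_j, p)`. -/
noncomputable def Dpmf : ℕ → ℕ → ℝ → ℕ → ℝ
  | _, 0, _, j => if j = 0 then 1 else 0
  | m, (k+1), p, j => ∑ i ∈ Finset.range (j+1), binomPMF m p i * Dpmf (m - i) k p (j - i)

end PrimBip

/-!
`𝒪^b_k` consists of the vertices `u ∈ 𝒦^b_k` joined to `σ^b(k)` through a white vertex `x`.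
The `𝒩_i` peel `𝒦^b_k` greedily, so they are disjoint and catch every such `u` whose middle vertex
`x` is some `v_{k,i}`. The point is to identify `x`. It has no open edge to an earlier `σ^b(j)`,
since `u` would then already lie in `𝒪^b_j`. So if `x` comes after `σ^b(k)` in Prim order it is
undiscovered, i.e. `x ∈ 𝒪^w_k`. If it comes before, Prim's minimality closes every edge leaving
`Σ(rk x)`, which makes `x` a lead vertex and forces the next Prim vertex, a black neighbour of `x`,
to be `σ^b(k)` itself: `x = σ(τ^b_k - 1)` and `u ∈ 𝒩_0`.
-/

namespace PrimBip

variable {nb nw : ℕ} {σ : ℕ → V nb nw}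

section Colours

lemma mem_whites_iff_notMem_blacks {v : V nb nw} : v ∈ whites nb nw ↔ v ∉ blacks nb nw := by
  rw [blacks, whites, ← Set.compl_range_inl, Set.mem_compl_iff]

/-- Pairs of the same colour carry the junk weight `2`. -/
lemma mem_whites_iff_of_adj {W : Fin nb → Fin nw → ℝ} {p : ℝ} (hp : p < 2) {x y : V nb nw}
    (h : (percGraph W p).Adj x y) : y ∈ whites nb nw ↔ x ∈ blacks nb nw := by
  obtain ⟨-, hxy⟩ := h
  cases x <;> cases y <;> simp_all [wt, blacks, whites] <;> linarith

lemma mem_nbhd_singleton_iff {α : Type*} {G : SimpleGraph α} {s x : α} :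
    x ∈ nbhd G {s} ↔ G.Adj s x :=
  ⟨fun ⟨_, _, ha, h⟩ => Set.mem_singleton_iff.1 ha ▸ h, fun h => ⟨h.ne.symm, s, rfl, h⟩⟩

end Colours

section Enumeration

lemma IsPrimSeq.bijOn {W : Fin nb → Fin nw → ℝ} (hσ : IsPrimSeq W σ) :
    Set.BijOn σ (Set.Iio (nb + nw)) Set.univ :=
  ⟨Set.mapsTo_univ _ _, hσ.2.1, hσ.1.symm.subset⟩

lemma apply_rk0 (hσ : Set.BijOn σ (Set.Iio (nb + nw)) Set.univ) (v : V nb nw) :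
    σ (rk0 σ v) = v := by
  obtain ⟨i, -, hi⟩ := hσ.surjOn (Set.mem_univ v)
  exact Nat.sInf_mem (s := {i | σ i = v}) ⟨i, hi⟩

lemma rk0_lt (hσ : Set.BijOn σ (Set.Iio (nb + nw)) Set.univ) (v : V nb nw) :
    rk0 σ v < nb + nw := by
  obtain ⟨i, hi, hiv⟩ := hσ.surjOn (Set.mem_univ v)
  exact (Nat.sInf_le hiv).trans_lt hi

lemma rk0_apply (hσ : Set.BijOn σ (Set.Iio (nb + nw)) Set.univ) {j : ℕ} (hj : j < nb + nw) :
    rk0 σ (σ j) = j :=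
  hσ.injOn (rk0_lt hσ _) hj (apply_rk0 hσ _)

lemma mem_Sig_iff (hσ : Set.BijOn σ (Set.Iio (nb + nw)) Set.univ) {v : V nb nw} {i : ℕ} :
    v ∈ Sig σ i ↔ rk0 σ v < i :=
  ⟨fun ⟨_, hj, hjv⟩ => (Nat.sInf_le hjv).trans_lt hj, fun h => ⟨rk0 σ v, h, apply_rk0 hσ v⟩⟩

lemma SigB_mono (σ : ℕ → V nb nw) : Monotone (SigB σ) := fun _ _ h =>
  Set.inter_subset_inter_left _ (Set.image_mono (Set.Iio_subset_Iio h))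

lemma SigB_zero (σ : ℕ → V nb nw) : SigB σ 0 = ∅ := by
  simp [SigB, Sig]

lemma SigB_add_one_subset (σ : ℕ → V nb nw) (i : ℕ) :
    SigB σ (i + 1) ⊆ insert (σ i) (SigB σ i) := by
  rintro v ⟨⟨j, hj, rfl⟩, hb⟩
  rcases Nat.lt_succ_iff_lt_or_eq.1 hj with hj | rfl
  · exact Or.inr ⟨⟨j, hj, rfl⟩, hb⟩
  · exact Or.inl rfl

lemma SigB_add_one_of_notMem (σ : ℕ → V nb nw) {i : ℕ} (hi : σ i ∉ blacks nb nw) :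
    SigB σ (i + 1) = SigB σ i :=
  Set.Subset.antisymm
    (fun _ hv => (SigB_add_one_subset σ i hv).resolve_left fun h => hi (h ▸ hv.2))
    (SigB_mono σ i.le_succ)

lemma ncard_SigB_add_one_le (σ : ℕ → V nb nw) (i : ℕ) :
    (SigB σ (i + 1)).ncard ≤ (SigB σ i).ncard + 1 :=
  (Set.ncard_le_ncard (SigB_add_one_subset σ i)).trans (Set.ncard_insert_le _ _)

lemma ncard_SigB_total (hσ : Set.BijOn σ (Set.Iio (nb + nw)) Set.univ) :
    (SigB σ (nb + nw)).ncard = nb := by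
  rw [SigB, Sig, hσ.image_eq, Set.univ_inter, blacks,
    Set.ncard_range_of_injective Sum.inl_injective, Nat.card_eq_fintype_card, Fintype.card_fin]

lemma exists_le_apply_eq {f : ℕ → ℕ} (hf : ∀ i, f (i + 1) ≤ f i + 1) {n k : ℕ}
    (h0 : f 0 ≤ k) (hn : k ≤ f n) : ∃ i ≤ n, f i = k := by
  induction n with
  | zero => exact ⟨0, le_rfl, le_antisymm h0 hn⟩
  | succ n ih =>
    rcases le_or_gt k (f n) with h | h
    · obtain ⟨i, hi, hik⟩ := ih h
      exact ⟨i, hi.trans n.le_succ, hik⟩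
    · exact ⟨n + 1, le_rfl, by have := hf n; omega⟩

lemma lt_tb_iff (hσ : Set.BijOn σ (Set.Iio (nb + nw)) Set.univ) {k i : ℕ} (hk : k ≤ nb) :
    i < tb σ k ↔ (SigB σ i).ncard < k := by
  have hivt : ∀ {n}, k ≤ (SigB σ n).ncard → ∃ i ≤ n, (SigB σ i).ncard = k := fun hn =>
    exists_le_apply_eq (ncard_SigB_add_one_le σ) (by simp [SigB_zero]) hn
  have htb : (SigB σ (tb σ k)).ncard = k := by
    obtain ⟨i, -, hi⟩ := hivt (n := nb + nw) (by rwa [ncard_SigB_total hσ])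
    exact Nat.sInf_mem (s := {i | (SigB σ i).ncard = k}) ⟨i, hi⟩
  refine ⟨fun h => lt_of_not_ge fun h' => ?_, fun h => lt_of_not_ge fun h' => ?_⟩
  · obtain ⟨j, hj, hjk⟩ := hivt h'
    have : tb σ k ≤ j := Nat.sInf_le hjk
    omega
  · have := Set.ncard_le_ncard (SigB_mono σ h')
    omega

lemma le_ncard_SigB_tb (hσ : Set.BijOn σ (Set.Iio (nb + nw)) Set.univ) {k : ℕ} (hk : k ≤ nb) :
    k ≤ (SigB σ (tb σ k)).ncard :=
  not_lt.1 ((lt_tb_iff hσ hk).not.1 (lt_irrefl _))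

lemma one_le_tb (hσ : Set.BijOn σ (Set.Iio (nb + nw)) Set.univ) {k : ℕ} (hk1 : 1 ≤ k)
    (hk : k ≤ nb) : 1 ≤ tb σ k :=
  (lt_tb_iff hσ hk).2 (by rw [SigB_zero, Set.ncard_empty]; exact hk1)

lemma tb_le (hσ : Set.BijOn σ (Set.Iio (nb + nw)) Set.univ) {k : ℕ} (hk : k ≤ nb) :
    tb σ k ≤ nb + nw :=
  not_lt.1 fun h => ((lt_tb_iff hσ hk).1 h).not_ge (by rwa [ncard_SigB_total hσ])

lemma tb_mono (hσ : Set.BijOn σ (Set.Iio (nb + nw)) Set.univ) {j k : ℕ} (hjk : j ≤ k)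
    (hk : k ≤ nb) : tb σ j ≤ tb σ k :=
  not_lt.1 fun h => ((lt_tb_iff hσ (hjk.trans hk)).1 h).not_ge (hjk.trans (le_ncard_SigB_tb hσ hk))

lemma sigb_mem_blacks (hσ : Set.BijOn σ (Set.Iio (nb + nw)) Set.univ) {k : ℕ} (hk1 : 1 ≤ k)
    (hk : k ≤ nb) : sigb σ k ∈ blacks nb nw := by
  by_contra h
  have htb := one_le_tb hσ hk1 hk
  have hlt := (lt_tb_iff hσ hk).1 (Nat.sub_one_lt_of_lt htb)
  rw [← SigB_add_one_of_notMem σ (i := tb σ k - 1) h, Nat.sub_add_cancel htb] at hlt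
  exact hlt.not_ge (le_ncard_SigB_tb hσ hk)

lemma sigb_mem_Sig (hσ : Set.BijOn σ (Set.Iio (nb + nw)) Set.univ) {k : ℕ} (hk1 : 1 ≤ k)
    (hk : k ≤ nb) : sigb σ k ∈ Sig σ (tb σ k) :=
  ⟨tb σ k - 1, Nat.sub_one_lt_of_lt (one_le_tb hσ hk1 hk), rfl⟩

lemma exists_sigb_eq_of_lt (hσ : Set.BijOn σ (Set.Iio (nb + nw)) Set.univ) {k : ℕ}
    (hk : k ≤ nb) {b : V nb nw} (hb : b ∈ blacks nb nw) (hlt : rk0 σ b + 1 < tb σ k) :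
    ∃ j, 1 ≤ j ∧ j < k ∧ sigb σ j = b := by
  set r := rk0 σ b
  set j := (SigB σ (r + 1)).ncard with hj
  have hr : b ∉ SigB σ r := fun h => lt_irrefl r ((mem_Sig_iff hσ).1 h.1)
  have hr1 : b ∈ SigB σ (r + 1) := ⟨(mem_Sig_iff hσ).2 (Nat.lt_succ_self r), hb⟩
  have hjr : (SigB σ r).ncard < j :=
    Set.ncard_lt_ncard ⟨SigB_mono σ r.le_succ, fun h => hr (h hr1)⟩
  have hjk : j < k := (lt_tb_iff hσ hk).1 hlt
  have htb : tb σ j = r + 1 :=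
    le_antisymm (Nat.sInf_le hj.symm) ((lt_tb_iff hσ (by omega)).2 hjr)
  refine ⟨j, by omega, hjk, ?_⟩
  change σ (tb σ j - 1) = b
  rw [htb, Nat.add_sub_cancel]
  exact apply_rk0 hσ b

end Enumeration

section Discovery

lemma ObAux_fst_mono (G : SimpleGraph (V nb nw)) (σ : ℕ → V nb nw) :
    Monotone fun k => (ObAux G σ k).1 :=
  monotone_nat_of_le_succ fun _ => Set.subset_union_left

lemma Ob_subset_ObAux_fst (G : SimpleGraph (V nb nw)) (σ : ℕ → V nb nw) {k : ℕ} (hk : 1 ≤ k) :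
    Ob G σ k ⊆ (ObAux G σ k).1 := by
  obtain ⟨k, rfl⟩ := Nat.exists_eq_add_of_le' hk
  exact Set.subset_union_right

lemma Ob_eq (G : SimpleGraph (V nb nw)) (σ : ℕ → V nb nw) {k : ℕ} (hk : 1 ≤ k) :
    Ob G σ k = nbhd2 G {sigb σ k} ∩ Kb G σ k := by
  obtain ⟨k, rfl⟩ := Nat.exists_eq_add_of_le' hk
  rfl

lemma Kb_subset_of_le (hσ : Set.BijOn σ (Set.Iio (nb + nw)) Set.univ) (G : SimpleGraph (V nb nw))
    {j k : ℕ} (hjk : j ≤ k) (hk : k ≤ nb) : Kb G σ k ⊆ Kb G σ j :=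
  Set.sdiff_subset_sdiff_right <| Set.union_subset_union (ObAux_fst_mono G σ (by omega))
    (SigB_mono σ (tb_mono hσ hjk hk))

lemma notMem_Sig_of_mem_Kb {G : SimpleGraph (V nb nw)} {k : ℕ} {u : V nb nw}
    (hu : u ∈ Kb G σ k) : u ∉ Sig σ (tb σ k) :=
  fun h => hu.2 (Or.inr ⟨h, hu.1⟩)

variable {W : Fin nb → Fin nw → ℝ} {p : ℝ}

lemma mem_Ob_iff (hp : p < 2) (hσ : Set.BijOn σ (Set.Iio (nb + nw)) Set.univ) {k : ℕ}
    (hk1 : 1 ≤ k) (hk : k ≤ nb) {u : V nb nw} :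
    u ∈ Ob (percGraph W p) σ k ↔ u ∈ Kb (percGraph W p) σ k ∧
      ∃ x, (percGraph W p).Adj (sigb σ k) x ∧ (percGraph W p).Adj x u := by
  rw [Ob_eq _ _ hk1]
  refine ⟨fun ⟨⟨⟨_, x, hx, hxu⟩, _⟩, hu⟩ => ⟨hu, x, mem_nbhd_singleton_iff.1 hx, hxu⟩, ?_⟩
  rintro ⟨hu, x, hx, hxu⟩
  refine ⟨⟨⟨fun h => ?_, x, mem_nbhd_singleton_iff.2 hx, hxu⟩, fun h => ?_⟩, hu⟩
  · exact mem_whites_iff_notMem_blacks.1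
      ((mem_whites_iff_of_adj hp (mem_nbhd_singleton_iff.1 h)).2 (sigb_mem_blacks hσ hk1 hk)) hu.1
  · rw [Set.mem_singleton_iff] at h
    exact notMem_Sig_of_mem_Kb hu (h ▸ sigb_mem_Sig hσ hk1 hk)

/-- Otherwise `u` would already lie in `𝒪^b_j`. -/
lemma not_adj_of_mem_Kb (hp : p < 2) (hσ : Set.BijOn σ (Set.Iio (nb + nw)) Set.univ)
    {j k : ℕ} (hj1 : 1 ≤ j) (hjk : j < k) (hk : k ≤ nb) {x u : V nb nw}
    (hu : u ∈ Kb (percGraph W p) σ k) (hx : (percGraph W p).Adj (sigb σ j) x) :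
    ¬ (percGraph W p).Adj x u := fun hxu =>
  have hOb : u ∈ Ob (percGraph W p) σ j :=
    (mem_Ob_iff hp hσ hj1 (by omega)).2 ⟨Kb_subset_of_le hσ _ hjk.le hk hu, x, hx, hxu⟩
  hu.2 (Or.inl (ObAux_fst_mono _ σ (by omega : j ≤ k - 1) (Ob_subset_ObAux_fst _ σ hj1 hOb)))

lemma mem_Kw_of (hσ : Set.BijOn σ (Set.Iio (nb + nw)) Set.univ) (G : SimpleGraph (V nb nw))
    {k : ℕ} (hk1 : 1 ≤ k) (hk : k ≤ nb) {w : V nb nw} (hw : w ∈ whites nb nw)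
    (hwk : tb σ k ≤ rk0 σ w) (hfresh : ∀ j, 1 ≤ j → j < k → ¬ G.Adj (sigb σ j) w) :
    w ∈ Kw G σ k := by
  induction k, hk1 using Nat.le_induction with
  | base => exact ⟨hw, fun h => (not_lt.2 hwk) ((mem_Sig_iff hσ).1 h.1)⟩
  | succ k hk1 ih =>
    obtain ⟨k, rfl⟩ := Nat.exists_eq_add_of_le' hk1
    refine ⟨ih (by omega) ((tb_mono hσ (by omega) hk).trans hwk)
      (fun j hj1 hj => hfresh j hj1 (by omega)), ?_⟩
    rintro (⟨hn, -⟩ | ⟨hS, -⟩)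
    · exact hfresh (k + 1) (by omega) (by omega) (mem_nbhd_singleton_iff.1 hn)
    · exact (not_lt.2 hwk) ((mem_Sig_iff hσ).1 hS)

end Discovery

section Prim

lemma le_rk0_of_reachable (hσ : Set.BijOn σ (Set.Iio (nb + nw)) Set.univ)
    {G : SimpleGraph (V nb nw)} {w x : V nb nw}
    (hcut : ∀ a < rk0 σ w, ∀ b, rk0 σ w ≤ b → b < nb + nw → ¬ G.Adj (σ a) (σ b))
    (h : G.Reachable w x) : rk0 σ w ≤ rk0 σ x := by
  rw [SimpleGraph.reachable_iff_reflTransGen] at h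
  induction h with
  | refl => exact le_rfl
  | @tail y z _ hyz ih =>
    refine not_lt.1 fun hz => hcut _ hz _ ih (rk0_lt hσ y) ?_
    rw [apply_rk0 hσ, apply_rk0 hσ]
    exact hyz.symm

variable {W : Fin nb → Fin nw → ℝ} {p : ℝ}

/-- The Prim edge into `σ r` is the lightest edge leaving `Σ(r)`. -/
lemma not_adj_of_forall_not_adj (hσ : IsPrimSeq W σ) {r : ℕ} (hr : r < nb + nw)
    (hprev : ∀ j < r, ¬ (percGraph W p).Adj (σ j) (σ r))
    {a b : ℕ} (ha : a < r) (hb : r ≤ b) (hbn : b < nb + nw) :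
    ¬ (percGraph W p).Adj (σ a) (σ b) := by
  rintro ⟨-, hab⟩
  obtain ⟨j, hj, hmin⟩ := hσ.2.2 r (by omega) hr
  exact hprev j hj ⟨fun h => hj.ne (hσ.2.1 (by simp; omega) hr h),
    (hmin a b ha hb hbn).trans hab⟩

/-- Prim's next edge is no heavier than `σ r — σ b`, and the closed cut stops it from starting
before `r`. -/
lemma adj_add_one_of_not_adj (hσ : IsPrimSeq W σ) {r b : ℕ} (hrb : r < b) (hbn : b < nb + nw)
    (hcut : ∀ a < r, ∀ c, r ≤ c → c < nb + nw → ¬ (percGraph W p).Adj (σ a) (σ c))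
    (hadj : (percGraph W p).Adj (σ r) (σ b)) : (percGraph W p).Adj (σ r) (σ (r + 1)) := by
  obtain ⟨j, hj, hmin⟩ := hσ.2.2 (r + 1) (by omega) (by omega)
  have hadj' : (percGraph W p).Adj (σ j) (σ (r + 1)) :=
    ⟨fun h => hj.ne (hσ.2.1 (by simp; omega) (by simp; omega) h),
      (hmin r b (by omega) hrb hbn).trans hadj.2⟩
  obtain rfl : j = r := by
    by_contra h
    exact hcut j (by omega) (r + 1) (by omega) (by omega) hadj'
  exact hadj'

lemma eq_vat_and_isLead (hp : p < 2) (hσ : IsPrimSeq W σ) {k : ℕ} (hk1 : 1 ≤ k) (hk : k ≤ nb)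
    {w u : V nb nw} (hw : w ∈ whites nb nw) (hwk : rk0 σ w < tb σ k) (huk : tb σ k ≤ rk0 σ u)
    (hfresh : ∀ j, 1 ≤ j → j < k → ¬ (percGraph W p).Adj (sigb σ j) w)
    (hwu : (percGraph W p).Adj w u) :
    w = vat σ (tb σ k - 1) ∧ isLead (percGraph W p) σ w := by
  have hbij := hσ.bijOn
  set r := rk0 σ w
  have hσr : σ r = w := apply_rk0 hbij w
  have htb := tb_le hbij hk
  have hearlier : ∀ i, i + 1 < tb σ k → ¬ (percGraph W p).Adj (σ i) w := fun i hi hadj => by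
    obtain ⟨j, hj1, hjk, hj⟩ := exists_sigb_eq_of_lt hbij hk ((mem_whites_iff_of_adj hp hadj).1 hw)
      (by rwa [rk0_apply hbij (by omega)])
    exact hfresh j hj1 hjk (hj ▸ hadj)
  have hcut : ∀ a < r, ∀ b, r ≤ b → b < nb + nw → ¬ (percGraph W p).Adj (σ a) (σ b) :=
    fun a ha b hb hbn => not_adj_of_forall_not_adj hσ (by omega)
      (fun j hj => hσr ▸ hearlier j (by omega)) ha hb hbn
  have hnext : (percGraph W p).Adj w (σ (r + 1)) := hσr ▸
    adj_add_one_of_not_adj hσ (by omega) (rk0_lt hbij u) hcut (by rwa [hσr, apply_rk0 hbij u])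
  have hr : r + 1 = tb σ k - 1 := by
    have hne : r ≠ tb σ k - 1 := fun h => mem_whites_iff_notMem_blacks.1 hw
      (hσr ▸ h ▸ sigb_mem_blacks hbij hk1 hk)
    by_contra h
    exact hearlier (r + 1) (by omega) hnext.symm
  refine ⟨?_, fun x hx => le_rk0_of_reachable hbij hcut hx⟩
  change w = σ (tb σ k - 1 - 1)
  rw [← hr, Nat.add_sub_cancel, hσr]

lemma mem_Ow_or_eq_vat (hp : p < 2) (hσ : IsPrimSeq W σ) {k : ℕ} (hk1 : 1 ≤ k) (hk : k ≤ nb)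
    {x u : V nb nw} (hu : u ∈ Kb (percGraph W p) σ k) (hx : (percGraph W p).Adj (sigb σ k) x)
    (hxu : (percGraph W p).Adj x u) :
    x ∈ Ow (percGraph W p) σ k ∨ (x = vat σ (tb σ k - 1) ∧
      x ∈ Jw (percGraph W p) σ k ∧ x ∈ nbhd (percGraph W p) {sigb σ k}) := by
  have hbij := hσ.bijOn
  have hw : x ∈ whites nb nw := (mem_whites_iff_of_adj hp hx).2 (sigb_mem_blacks hbij hk1 hk)
  have hfresh : ∀ j, 1 ≤ j → j < k → ¬ (percGraph W p).Adj (sigb σ j) x :=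
    fun j hj1 hjk hj => not_adj_of_mem_Kb hp hbij hj1 hjk hk hu hj hxu
  rcases le_or_gt (tb σ k) (rk0 σ x) with h | h
  · exact Or.inl ⟨mem_nbhd_singleton_iff.2 hx, mem_Kw_of hbij _ hk1 hk hw h hfresh⟩
  · have huk : tb σ k ≤ rk0 σ u :=
      not_lt.1 fun h' => notMem_Sig_of_mem_Kb hu ((mem_Sig_iff hbij).2 h')
    obtain ⟨hxv, hlead⟩ := eq_vat_and_isLead hp hσ hk1 hk hw h huk hfresh hxu
    exact Or.inr ⟨hxv, ⟨⟨(mem_Sig_iff hbij).2 h, hw⟩, hlead⟩, mem_nbhd_singleton_iff.2 hx⟩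

end Prim

section Peeling

variable {α : Type*} {K N : ℕ → Set α} {m : ℕ}

lemma peel_antitone (hK : ∀ i, 1 ≤ i → i ≤ m → K (i + 1) = K i \ N i) {i j : ℕ} (hi : 1 ≤ i)
    (hij : i ≤ j) (hj : j ≤ m + 1) : K j ⊆ K i := by
  induction j, hij using Nat.le_induction with
  | base => exact subset_rfl
  | succ j hij ih =>
    exact ((hK j (by omega) (by omega)).trans_subset Set.sdiff_subset).trans (ih (by omega))

lemma disjoint_peel (hK : ∀ i, 1 ≤ i → i ≤ m → K (i + 1) = K i \ N i) {i j : ℕ} (hi : 1 ≤ i)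
    (hij : i < j) (hj : j ≤ m + 1) : Disjoint (N i) (K j) := by
  refine Set.disjoint_right.2 fun x hx hNx => ?_
  have := peel_antitone hK (i := i + 1) (by omega) hij hj hx
  rw [hK i hi (by omega)] at this
  exact this.2 hNx

lemma pairwise_disjoint_peel (hK : ∀ i, 1 ≤ i → i ≤ m → K (i + 1) = K i \ N i)
    (hNK : ∀ i, 1 ≤ i → i ≤ m → N i ⊆ K i) (h0 : N 0 ⊆ K (m + 1)) :
    ∀ i ≤ m, ∀ j ≤ m, i ≠ j → Disjoint (N i) (N j) := by
  intro i hi j hj hij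
  wlog hlt : i < j generalizing i j
  · exact (this j hj i hi hij.symm (by omega)).symm
  rcases Nat.eq_zero_or_pos i with rfl | hi0
  · exact ((disjoint_peel hK (by omega) (Nat.lt_succ_of_le hj) le_rfl).mono_right h0).symm
  · exact (disjoint_peel hK hi0 hlt (by omega)).mono_right (hNK j (by omega) hj)

lemma mem_peel_last_or (hK : ∀ i, 1 ≤ i → i ≤ m → K (i + 1) = K i \ N i) {x : α}
    (hx : x ∈ K 1) : x ∈ K (m + 1) ∨ ∃ i, 1 ≤ i ∧ i ≤ m ∧ x ∈ N i := by
  suffices ∀ j ≤ m, x ∈ K (j + 1) ∨ ∃ i, 1 ≤ i ∧ i ≤ j ∧ x ∈ N i from this m le_rfl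
  intro j hj
  induction j with
  | zero => exact Or.inl hx
  | succ j ih =>
    rcases ih (by omega) with h | ⟨i, hi1, hij, hi⟩
    · by_cases hN : x ∈ N (j + 1)
      · exact Or.inr ⟨j + 1, by omega, le_rfl, hN⟩
      · exact Or.inl (by rw [hK (j + 1) (by omega) hj]; exact ⟨h, hN⟩)
    · exact Or.inr ⟨i, hi1, by omega, hi⟩

end Peeling

end PrimBip

open PrimBip

theorem statement_11_general {nb nw : ℕ}
    (W : Fin nb → Fin nw → ℝ) (σ : ℕ → V nb nw)
    (hσ : IsPrimSeq W σ)
    (p : ℝ) (hp : p ∈ Set.Icc (0:ℝ) 1)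
    (G : SimpleGraph (V nb nw)) (hG : G = percGraph W p)
    (k : ℕ) (hk1 : 1 ≤ k) (hk2 : k ≤ nb)
    (m : ℕ)
    -- `v` enumerates `𝒪^w_k` in increasing Prim rank
    (v : ℕ → V nb nw)
    (hv1 : ∀ i, 1 ≤ i → i ≤ m → v i ∈ Ow G σ k)
    (hv2 : Ow G σ k ⊆ v '' Set.Icc 1 m)
    -- the sets `𝒦_{k,i}` and `𝒩_i`
    (KK NN : ℕ → Set (V nb nw))
    (hK1 : KK 1 = Kb G σ k)
    (hNN : ∀ i, 1 ≤ i → i ≤ m → NN i = nbhd G {v i} ∩ KK i)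
    (hKK : ∀ i, 1 ≤ i → i ≤ m → KK (i+1) = KK i \ NN i)
    (hN0a : (vat σ (tb σ k - 1) ∈ Jw G σ k ∧ vat σ (tb σ k - 1) ∈ nbhd G {sigb σ k}) →
      NN 0 = nbhd G {vat σ (tb σ k - 1)} ∩ KK (m+1))
    (hN0b : ¬ (vat σ (tb σ k - 1) ∈ Jw G σ k ∧ vat σ (tb σ k - 1) ∈ nbhd G {sigb σ k}) →
      NN 0 = ∅) :
    (∀ i ≤ m, ∀ j ≤ m, i ≠ j → Disjoint (NN i) (NN j)) ∧
    Ob G σ k = ⋃ i ∈ Finset.range (m+1), NN i := by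
  subst hG
  have hp2 : p < 2 := by linarith [hp.2]
  have hOb := fun u => mem_Ob_iff (W := W) (u := u) hp2 hσ.bijOn hk1 hk2
  set c := vat σ (tb σ k - 1)
  have hNK : ∀ i, 1 ≤ i → i ≤ m → NN i ⊆ KK i :=
    fun i hi him => hNN i hi him ▸ Set.inter_subset_right
  have hsub : ∀ x, (percGraph W p).Adj (sigb σ k) x → ∀ i, 1 ≤ i → i ≤ m + 1 →
      nbhd _ {x} ∩ KK i ⊆ Ob _ σ k := fun x hx i hi him u ⟨hu, huK⟩ =>
    (hOb u).2 ⟨hK1 ▸ peel_antitone hKK le_rfl hi him huK, x, hx, mem_nbhd_singleton_iff.1 hu⟩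
  have hN0 : NN 0 ⊆ KK (m + 1) ∩ Ob (percGraph W p) σ k := by
    by_cases hc : c ∈ Jw (percGraph W p) σ k ∧ c ∈ nbhd (percGraph W p) {sigb σ k}
    · rw [hN0a hc]
      exact Set.subset_inter Set.inter_subset_right
        (hsub c (mem_nbhd_singleton_iff.1 hc.2) _ (by omega) le_rfl)
    · simp [hN0b hc]
  refine ⟨pairwise_disjoint_peel hKK hNK (hN0.trans Set.inter_subset_left), ?_⟩
  refine subset_antisymm (fun u hu => ?_) (Set.iUnion₂_subset fun i hi => ?_)
  · obtain ⟨huK, x, hx, hxu⟩ := (hOb u).1 hu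
    simp only [Set.mem_iUnion, Finset.mem_range, exists_prop]
    rcases mem_peel_last_or hKK (hK1 ▸ huK) with hlast | ⟨i, hi1, him, hi⟩
    · rcases mem_Ow_or_eq_vat hp2 hσ hk1 hk2 huK hx hxu with hOw | ⟨rfl, hc⟩
      · obtain ⟨i, ⟨hi1, him⟩, rfl⟩ := hv2 hOw
        exact ⟨i, by omega, hNN i hi1 him ▸
          ⟨mem_nbhd_singleton_iff.2 hxu, peel_antitone hKK hi1 (by omega) le_rfl hlast⟩⟩
      · exact ⟨0, by omega, hN0a hc ▸ ⟨mem_nbhd_singleton_iff.2 hxu, hlast⟩⟩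
    · exact ⟨i, by omega, hi⟩
  · rcases Nat.eq_zero_or_pos i with rfl | hi0
    · exact hN0.trans Set.inter_subset_right
    · have him : i ≤ m := by simp only [Finset.mem_range] at hi; omega
      rw [hNN i hi0 him]
      exact hsub _ (mem_nbhd_singleton_iff.1 (hv1 i hi0 him).1) i hi0 (by omega)

/-- Lemma `lem: decomp`: listing the members of `𝒪^w_k` in increasing
Prim rank as `v_{k,1},…,v_{k,O^w_k}` and setting `𝒦_{k,1} = 𝒦^b_k`,
`𝒩_i = N(v_{k,i}) ∩ 𝒦_{k,i}`, `𝒦_{k,i+1} = 𝒦_{k,i} ∖ 𝒩_i`, together with the boundary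
set `𝒩_0`, the sets `𝒩_i`, `0 ≤ i ≤ O^w_k`, are pairwise disjoint and their union is
`𝒪^b_k`. -/
theorem statement_11 {nb nw : ℕ} (hnb : 0 < nb) (hnw : 0 < nw)
    (W : Fin nb → Fin nw → ℝ) (σ : ℕ → V nb nw)
    (hW : GoodWeights W) (hσ : IsPrimSeq W σ)
    (p : ℝ) (hp : p ∈ Set.Icc (0:ℝ) 1)
    (G : SimpleGraph (V nb nw)) (hG : G = percGraph W p)
    (k : ℕ) (hk1 : 1 ≤ k) (hk2 : k ≤ nb)
    (m : ℕ) (hm : m = Owc G σ k)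
    -- `v` enumerates `𝒪^w_k` in increasing Prim rank
    (v : ℕ → V nb nw)
    (hv1 : ∀ i, 1 ≤ i → i ≤ m → v i ∈ Ow G σ k)
    (hv2 : Ow G σ k ⊆ v '' Set.Icc 1 m)
    (hv3 : StrictMonoOn (fun i => rk0 σ (v i)) (Set.Icc 1 m))
    -- the sets `𝒦_{k,i}` and `𝒩_i`
    (KK NN : ℕ → Set (V nb nw))
    (hK1 : KK 1 = Kb G σ k)
    (hNN : ∀ i, 1 ≤ i → i ≤ m → NN i = nbhd G {v i} ∩ KK i)
    (hKK : ∀ i, 1 ≤ i → i ≤ m → KK (i+1) = KK i \ NN i)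
    (hN0a : (vat σ (tb σ k - 1) ∈ Jw G σ k ∧ vat σ (tb σ k - 1) ∈ nbhd G {sigb σ k}) →
      NN 0 = nbhd G {vat σ (tb σ k - 1)} ∩ KK (m+1))
    (hN0b : ¬ (vat σ (tb σ k - 1) ∈ Jw G σ k ∧ vat σ (tb σ k - 1) ∈ nbhd G {sigb σ k}) →
      NN 0 = ∅) :
    (∀ i ≤ m, ∀ j ≤ m, i ≠ j → Disjoint (NN i) (NN j)) ∧
    Ob G σ k = ⋃ i ∈ Finset.range (m+1), NN i :=
  statement_11_general W σ hσ p hp G hG k hk1 hk2 m v hv1 hv2 KK NN hK1 hNN hKK hN0a hN0b
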